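/- Public announcements cannot simulate pseudo-anonymous announcements up to bisimulation: there exists a finite epistemic model M on 3 agents and a pseudo-anonymous announcement p⟡ whose result from a state s is not bisimilar to any public-announcement update of M from s. Concretely, for the model M of Figure 1 and formula χ := r ∧ K̂_a q ∧ K̂_b K_a(¬q ∧ r) ∧ K_b p, the formula χ holds at the state (s,a) of M^{p⟡}, but χ fails at s in every public-announcement update (restriction to a definable subset of states containing s) of M. -/

import Mathlib

/-- An epistemic (Kripke) model over agent set `Agt` and state set `St`. -/
structure Model (Agt : Type) (St : Type) where
  rel : Agt → St → St → Prop
  val : ℕ → St → Prop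

/-- The model is an epistemic model proper: each agent's relation is an equivalence. -/
def isEquivModel {Agt St : Type} (M : Model Agt St) : Prop :=
  ∀ a, Equivalence (M.rel a)

/-- Formulas: atoms, ⊥, →, ∧, K_a, ▲ (safety), [φ⟡]ψ (pseudo-anonymous announcement),
    [φ⟡!]ψ (safe/intentional anonymous announcement). -/
inductive Form (Agt : Type) : Type where
  | atom : ℕ → Form Agt
  | bot  : Form Agt
  | imp  : Form Agt → Form Agt → Form Agt
  | and  : Form Agt → Form Agt → Form Agt
  | K    : Agt → Form Agt → Form Agt
  | tri  : Form Agt → Form Agt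
  | annA : Form Agt → Form Agt → Form Agt
  | annS : Form Agt → Form Agt → Form Agt

def Form.neg {Agt : Type} (φ : Form Agt) : Form Agt := .imp φ .bot

/-- One step of the safety operator: `⋁_{G ∈ N³} E_G (P ∧ X)`. -/
def fsafe {Agt St : Type} (M : Model Agt St) (P X : St → Prop) (s : St) : Prop :=
  ∃ G : Finset Agt, G.card = 3 ∧ ∀ a ∈ G, ∀ t, M.rel a s t → P t ∧ X t

/-- `▲P` semantically: greatest fixpoint of `fsafe M P`, i.e. union of post-fixed points. -/
def triSem {Agt St : Type} (M : Model Agt St) (P : St → Prop) (s : St) : Prop :=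
  ∃ X : St → Prop, X s ∧ ∀ t, X t → fsafe M P X t

/-- Product update of `M` with an action model whose events are `E`, relation `arel`, and
    (semantic) preconditions `pre`.  States not satisfying the precondition are cut off
    from the relation (this encodes the restriction to legal states). -/
def prodUpd {Agt St E : Type} (M : Model Agt St) (arel : Agt → E → E → Prop)
    (pre : E → St → Prop) : Model Agt (St × E) where
  rel c p q := pre p.2 p.1 ∧ pre q.2 q.1 ∧ M.rel c p.1 q.1 ∧ arel c p.2 q.2
  val n p := M.val n p.1

/-- Action relation of the pseudo-anonymous action model: `a ∼_c b` iff `(a = c ↔ b = c)`. -/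
def anonRel {Agt : Type} (c a b : Agt) : Prop := (a = c ↔ b = c)

/-- The pseudo-anonymous style update `M^{φ⟡}` (with precondition `pre a`). -/
def updA {Agt St : Type} (M : Model Agt St) (pre : Agt → St → Prop) : Model Agt (St × Agt) :=
  prodUpd M anonRel pre

/-- Satisfaction. -/
def Sat {Agt : Type} : {St : Type} → Model Agt St → St → Form Agt → Prop
  | _, M, s, .atom n => M.val n s
  | _, _, _, .bot => False
  | _, M, s, .imp φ ψ => Sat M s φ → Sat M s ψ
  | _, M, s, .and φ ψ => Sat M s φ ∧ Sat M s ψ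
  | _, M, s, .K a φ => ∀ t, M.rel a s t → Sat M t φ
  | _, M, s, .tri φ => triSem M (fun t => Sat M t φ) s
  | _, M, s, .annA φ ψ => ∀ a, (∀ t, M.rel a s t → Sat M t φ) →
      Sat (updA M (fun b t => ∀ u, M.rel b t u → Sat M u φ)) (s, a) ψ
  | _, M, s, .annS φ ψ => ∀ a, (∀ t, M.rel a s t → triSem M (fun u => Sat M u φ) t) →
      Sat (updA M (fun b t => ∀ u, M.rel b t u → triSem M (fun v => Sat M v φ) u)) (s, a) ψ

/-- The pseudo-anonymous update `M^{φ⟡}`. -/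
def updAnn {Agt St : Type} (M : Model Agt St) (φ : Form Agt) : Model Agt (St × Agt) :=
  updA M (fun b t => ∀ u, M.rel b t u → Sat M u φ)

/-- The safe (intentional) anonymous update `M^{φ⟡!}`. -/
def updSafe {Agt St : Type} (M : Model Agt St) (φ : Form Agt) : Model Agt (St × Agt) :=
  updA M (fun b t => ∀ u, M.rel b t u → triSem M (fun v => Sat M v φ) u)

/-- Public announcement update: restriction of `M` to `P` (encoded by cutting the relation). -/
def restrict {Agt St : Type} (M : Model Agt St) (P : St → Prop) : Model Agt St where
  rel a x y := P x ∧ P y ∧ M.rel a x y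
  val := M.val

/-- Iterative approximations `▲_n`. -/
def triN {Agt St : Type} (M : Model Agt St) (P : St → Prop) : ℕ → St → Prop
  | 0 => P
  | n + 1 => fun s => P s ∧ ∃ G : Finset Agt, G.card = 3 ∧
      ∀ a ∈ G, ∀ t, M.rel a s t → triN M P n t

/-- Standard bisimulation between two models. -/
structure Bisim {Agt St₁ St₂ : Type} (M₁ : Model Agt St₁) (M₂ : Model Agt St₂)
    (Z : St₁ → St₂ → Prop) : Prop where
  atoms : ∀ s t, Z s t → ∀ n, (M₁.val n s ↔ M₂.val n t)
  forth : ∀ s t, Z s t → ∀ a u, M₁.rel a s u → ∃ v, M₂.rel a t v ∧ Z u v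
  back  : ∀ s t, Z s t → ∀ a v, M₂.rel a t v → ∃ u, M₁.rel a s u ∧ Z u v

/-- `f` is a group assignment function for `M`. -/
def GroupAssign {Agt St : Type} (M : Model Agt St) (f : St → Finset Agt) : Prop :=
  (∀ t, f t = ∅ ∨ (f t).card = 3) ∧
  (∀ t t' i, i ∈ f t → M.rel i t t' → f t' ≠ ∅)

/-- `σ : Fin (m+1) → St` is an `f`-consistent path. -/
def FPath {Agt St : Type} (M : Model Agt St) (f : St → Finset Agt) (m : ℕ)
    (σ : Fin (m + 1) → St) : Prop :=
  ∀ k : Fin m, ∃ a ∈ f (σ k.castSucc), M.rel a (σ k.castSucc) (σ k.succ)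

/-- The model of Figure 1: agents `a = 0, b = 1, c = 2`; states
`t = 0, u = 1, s = 2, v = 3, w = 4, x = 5`. Agent a's cells: {u,s},{v,w},{x,t};
agent b is universal; agent c's cells: {t,u},{w,x},{s},{v}. -/
def cellA : Fin 6 → ℕ
  | 0 => 2 | 1 => 0 | 2 => 0 | 3 => 1 | 4 => 1 | 5 => 2

def cellC : Fin 6 → ℕ
  | 0 => 0 | 1 => 0 | 2 => 1 | 3 => 2 | 4 => 3 | 5 => 3

def M2 : Model (Fin 3) (Fin 6) where
  rel a x y :=
    match a with
    | 0 => cellA x = cellA y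
    | 1 => True
    | 2 => cellC x = cellC y
  /- atoms: 0 = p on {u,s,v,x}, 1 = q on {u}, 2 = r on {s}, 3 = o on {x} -/
  val n x := (n = 0 ∧ (x = 1 ∨ x = 2 ∨ x = 3 ∨ x = 5)) ∨ (n = 1 ∧ x = 1) ∨
             (n = 2 ∧ x = 2) ∨ (n = 3 ∧ x = 5)

/-- The diamond `K̂_i φ = ¬K_i¬φ`. -/
def Form.dia {Agt : Type} (a : Agt) (φ : Form Agt) : Form Agt := .neg (.K a φ.neg)

/-- `χ := r ∧ K̂_a q ∧ K̂_b K_a(¬q ∧ r) ∧ K_b p`. -/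
def chi : Form (Fin 3) :=
  .and (.atom 2)
    (.and (Form.dia 0 (.atom 1))
      (.and (Form.dia 1 (.K 0 (.and (Form.neg (.atom 1)) (.atom 2))))
        (.K 1 (.atom 0))))


/-!
In `M2^{p⟡}` the copy `(s,c)` of `s` survives while `(u,c)` does not (agent `c` cannot know `p`
at `u`, which `c` confuses with the `¬p`-state `t`), so `K_a(¬q ∧ r)` holds at `(s,c)`; together
with the witness `(u,a)` for `K̂_a q` this makes `χ` true at `(s,a)`. In a restriction of `M2`,
instead, `K̂_a q` at `s` forces `u` to survive, and `s` is the only `r`-state, whose `a`-cell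
contains `u`; so `K̂_b K_a(¬q ∧ r)` fails. As `χ` is a plain epistemic formula, it is invariant
under bisimulation.
-/

inductive Form.IsBasic {Agt : Type} : Form Agt → Prop
  | atom (n : ℕ) : IsBasic (.atom n)
  | bot : IsBasic .bot
  | imp {φ ψ : Form Agt} : IsBasic φ → IsBasic ψ → IsBasic (.imp φ ψ)
  | and {φ ψ : Form Agt} : IsBasic φ → IsBasic ψ → IsBasic (.and φ ψ)
  | K (a : Agt) {φ : Form Agt} : IsBasic φ → IsBasic (.K a φ)

theorem Bisim.sat_iff {Agt St₁ St₂ : Type} {M₁ : Model Agt St₁} {M₂ : Model Agt St₂}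
    {Z : St₁ → St₂ → Prop} (hZ : Bisim M₁ M₂ Z) {φ : Form Agt} (hφ : φ.IsBasic) :
    ∀ s t, Z s t → (Sat M₁ s φ ↔ Sat M₂ t φ) := by
  induction hφ with
  | atom n => exact fun s t hst => hZ.atoms s t hst n
  | bot => exact fun _ _ _ => Iff.rfl
  | imp _ _ ih₁ ih₂ => exact fun s t hst => imp_congr (ih₁ s t hst) (ih₂ s t hst)
  | and _ _ ih₁ ih₂ => exact fun s t hst => and_congr (ih₁ s t hst) (ih₂ s t hst)
  | K a _ ih =>
    intro s t hst
    constructor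
    · intro hs v hv
      obtain ⟨u, hu, huv⟩ := hZ.back s t hst a v hv
      exact (ih u v huv).mp (hs u hu)
    · intro ht u hu
      obtain ⟨v, hv, huv⟩ := hZ.forth s t hst a u hu
      exact (ih u v huv).mpr (ht v hv)

theorem sat_dia {Agt St : Type} (M : Model Agt St) (s : St) (a : Agt) (φ : Form Agt) :
    Sat M s (Form.dia a φ) ↔ ∃ t, M.rel a s t ∧ Sat M t φ := by
  simp only [Form.dia, Form.neg, Sat, imp_false, not_forall, not_not, exists_prop]

theorem chi_isBasic : chi.IsBasic := by
  unfold chi Form.dia Form.neg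
  repeat constructor

instance M2.decidableRel : (a : Fin 3) → (x y : Fin 6) → Decidable (M2.rel a x y)
  | 0, x, y => inferInstanceAs (Decidable (cellA x = cellA y))
  | 1, _, _ => inferInstanceAs (Decidable True)
  | 2, x, y => inferInstanceAs (Decidable (cellC x = cellC y))

instance M2.decidableVal (n : ℕ) (x : Fin 6) : Decidable (M2.val n x) :=
  inferInstanceAs (Decidable ((n = 0 ∧ (x = 1 ∨ x = 2 ∨ x = 3 ∨ x = 5)) ∨ (n = 1 ∧ x = 1) ∨
    (n = 2 ∧ x = 2) ∨ (n = 3 ∧ x = 5)))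

theorem isEquivModel_M2 : isEquivModel M2 := by
  intro a
  fin_cases a
  · exact ⟨fun _ => rfl, Eq.symm, Eq.trans⟩
  · exact ⟨fun _ => trivial, fun _ => trivial, fun _ _ => trivial⟩
  · exact ⟨fun _ => rfl, Eq.symm, Eq.trans⟩

theorem M2.val_one_iff (x : Fin 6) : M2.val 1 x ↔ x = 1 := by
  revert x; decide

theorem M2.val_two_iff (x : Fin 6) : M2.val 2 x ↔ x = 2 := by
  revert x; decide

theorem sat_updAnn_chi : Sat (updAnn M2 (.atom 0)) (2, 0) chi := by
  simp only [chi, sat_dia, Sat, Form.neg, updAnn, updA, prodUpd, anonRel]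
  refine ⟨by decide, ⟨(1, 0), by decide, by decide⟩, ⟨(2, 2), by decide, ?_⟩, ?_⟩
  · rintro ⟨t, j⟩
    revert t j
    decide
  · rintro ⟨t, j⟩ ⟨-, hj, -⟩
    exact hj t ((isEquivModel_M2 j).refl t)

theorem not_sat_restrict_chi (P : Fin 6 → Prop) : ¬ Sat (restrict M2 P) 2 chi := by
  simp only [chi, sat_dia, Sat, Form.neg, restrict]
  rintro ⟨-, ⟨u, ⟨-, hu, -⟩, hqu⟩, ⟨t, ⟨-, ht, -⟩, hKa⟩, -⟩
  obtain rfl : u = 1 := (M2.val_one_iff u).mp hqu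
  obtain rfl : t = 2 := (M2.val_two_iff t).mp (hKa t ⟨ht, ht, (isEquivModel_M2 0).refl t⟩).2
  exact (hKa 1 ⟨ht, hu, by decide⟩).1 hqu

/-- `χ` holds at state `(s,a)` of `M2^{p⟡}`, but for every formula `θ`
true at `s` (a definable restriction containing `s`), `χ` fails at `s` in the
public-announcement restriction of `M2` to `θ`; hence no public-announcement update of
`M2` from `s` is bisimilar to `M2^{p⟡}` from `(s,a)`. -/
theorem stmt2 :
    isEquivModel M2 ∧
    Sat (updAnn M2 (.atom 0)) ((2 : Fin 6), (0 : Fin 3)) chi ∧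
    (∀ θ : Form (Fin 3), Sat M2 2 θ →
      ¬ Sat (restrict M2 (fun x => Sat M2 x θ)) 2 chi) ∧
    (∀ θ : Form (Fin 3), Sat M2 2 θ →
      ¬ ∃ Z : (Fin 6 × Fin 3) → Fin 6 → Prop,
          Z ((2 : Fin 6), (0 : Fin 3)) (2 : Fin 6) ∧
          Bisim (updAnn M2 (.atom 0)) (restrict M2 (fun x => Sat M2 x θ)) Z) := by
  refine ⟨isEquivModel_M2, sat_updAnn_chi, fun θ _ => not_sat_restrict_chi _, ?_⟩
  rintro θ - ⟨Z, hZ, hbisim⟩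
  exact not_sat_restrict_chi _ ((hbisim.sat_iff chi_isBasic _ _ hZ).mp sat_updAnn_chi)
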